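/- arXiv:math/0103013 — 2 statements merged into one kernel-verified Lean document; each statement's English description precedes it below -/
import Mathlib

section
/- Let R = ℂ[x, x⁻¹] be the ring of Laurent polynomials in one variable over ℂ, and let D : R → Ω_{R/ℂ} be the universal derivation into the module of Kähler differentials of R over ℂ. Then the logarithmic differential x⁻¹ • D(x) ∈ Ω_{R/ℂ} is not in the range of D; that is, there is no f ∈ R with D f = x⁻¹ • D(x). -/
open LaurentPolynomial

noncomputable def lderMap : LaurentPolynomial ℂ →ₗ[ℂ] LaurentPolynomial ℂ :=
  Finsupp.lsum ℂ (fun (n : ℤ) => LinearMap.toSpanSingleton ℂ _ ((n : ℂ) • T (n - 1))) ∘ₗ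
    (AddMonoidAlgebra.coeffLinearEquiv ℂ).toLinearMap

lemma lderMap_single (n : ℤ) (a : ℂ) :
    lderMap (C a * T n) = (n : ℂ) • (C a * T (n - 1)) := by
  rw [← single_eq_C_mul_T, ← single_eq_C_mul_T]
  show Finsupp.lsum ℂ (fun (m : ℤ) => LinearMap.toSpanSingleton ℂ (LaurentPolynomial ℂ)
    ((m : ℂ) • T (m - 1))) (Finsupp.single n a) = _
  rw [Finsupp.lsum_single, LinearMap.toSpanSingleton_apply, T]
  rw [smul_comm, AddMonoidAlgebra.smul_single, smul_eq_mul, mul_one]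

noncomputable def lder : Derivation ℂ (LaurentPolynomial ℂ) (LaurentPolynomial ℂ) where
  toLinearMap := lderMap
  map_one_eq_zero' := by
    have := lderMap_single 0 1
    simpa using this
  leibniz' := by
    intro a b
    show lderMap (a * b) = a • lderMap b + b • lderMap a
    induction a using LaurentPolynomial.induction_on' with
    | add f g hf hg =>
      rw [add_mul, map_add, hf, hg, map_add, add_smul, smul_add]
      abel
    | C_mul_T m c =>
      induction b using LaurentPolynomial.induction_on' with
      | add f g hf hg =>
        rw [mul_add, map_add, hf, hg, map_add, add_smul, smul_add]
        abel
      | C_mul_T n d =>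
        have h1 : (C c * T m) * (C d * T n) = C (c * d) * T (m + n) := by
          rw [T_add, map_mul]; ring
        rw [h1, lderMap_single, lderMap_single, lderMap_single, smul_eq_mul, smul_eq_mul,
          mul_smul_comm, mul_smul_comm]
        have h2 : (C c * T m) * (C d * T (n - 1)) = C (c * d) * T (m + n - 1) := by
          rw [show m + n - 1 = m + (n - 1) by ring, T_add, map_mul]; ring
        have h3 : (C d * T n) * (C c * T (m - 1)) = C (c * d) * T (m + n - 1) := by
          rw [show m + n - 1 = n + (m - 1) by ring, T_add, map_mul]; ring
        rw [h2, h3, ← add_smul]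
        push_cast
        ring_nf

lemma lderMap_coeff (f : LaurentPolynomial ℂ) :
    Finsupp.lapply (R := ℂ) (M := ℂ) (-1 : ℤ) (AddMonoidAlgebra.coeffLinearEquiv ℂ (lderMap f)) = 0 := by
  induction f using LaurentPolynomial.induction_on' with
  | add f g hf hg => rw [map_add, map_add, map_add, hf, hg, add_zero]
  | C_mul_T n a =>
    rw [lderMap_single, ← single_eq_C_mul_T]
    show ((n : ℂ) • Finsupp.single (n - 1) a) (-1) = 0
    rw [Finsupp.smul_single, Finsupp.single_apply]
    split_ifs with h
    · have : n = 0 := by omega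
      simp [this]
    · rfl


/-- For the Laurent polynomial ring `R = ℂ[x, x⁻¹]` with universal derivation
`D : R → Ω_{R/ℂ}`, the logarithmic differential `x⁻¹ • D(x)` (i.e. `dx/x`)
is not in the range of `D`. -/
theorem laurent_dx_div_x_not_exact :
    ¬ ∃ f : LaurentPolynomial ℂ,
        KaehlerDifferential.D ℂ (LaurentPolynomial ℂ) f =
          (LaurentPolynomial.T (-1) : LaurentPolynomial ℂ) •
            KaehlerDifferential.D ℂ (LaurentPolynomial ℂ)
              (LaurentPolynomial.T 1 : LaurentPolynomial ℂ) := by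
  rintro ⟨f, hf⟩
  have h := congrArg lder.liftKaehlerDifferential hf
  rw [Derivation.liftKaehlerDifferential_comp_D, map_smul,
    Derivation.liftKaehlerDifferential_comp_D] at h
  have hT1 : lderMap (T 1) = 1 := by
    have := lderMap_single 1 1
    simpa using this
  rw [show lder (T 1) = lderMap (T 1) from rfl, hT1, smul_eq_mul, mul_one] at h
  replace h : lderMap f = T (-1) := h
  have h2 := lderMap_coeff f
  rw [h] at h2
  have : Finsupp.lapply (R := ℂ) (M := ℂ) (-1 : ℤ)
      (AddMonoidAlgebra.coeffLinearEquiv ℂ (T (-1) : LaurentPolynomial ℂ)) = 1 := by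
    show (Finsupp.single (-1 : ℤ) (1 : ℂ)) (-1) = 1
    simp
  rw [this] at h2
  exact one_ne_zero h2
end

section
/- Let R = ℂ[x, x⁻¹] be the ring of Laurent polynomials in one variable over ℂ, and let D : R → Ω_{R/ℂ} be the universal derivation into the module of Kähler differentials of R over ℂ. Then for every ω ∈ Ω_{R/ℂ} there exists a unique c ∈ ℂ such that ω − c • (x⁻¹ • D(x)) lies in the range of D; equivalently, the quotient Ω_{R/ℂ} / D(R) is a one-dimensional ℂ-vector space spanned by the class of dx/x. -/
open LaurentPolynomial

noncomputable section
abbrev R := LaurentPolynomial ℂ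
abbrev Ω := KaehlerDifferential ℂ (LaurentPolynomial ℂ)
abbrev DD : Derivation ℂ R Ω := KaehlerDifferential.D ℂ (LaurentPolynomial ℂ)
abbrev dx : Ω := DD (T 1)

def derivL : ℂ[T;T⁻¹] →ₗ[ℂ] ℂ[T;T⁻¹] :=
  Finsupp.lsum ℂ (fun n : ℤ => (n : ℂ) • (AddMonoidAlgebra.lsingle (n - 1) : ℂ →ₗ[ℂ] ℂ[T;T⁻¹]))
    ∘ₗ (AddMonoidAlgebra.coeffLinearEquiv ℂ).toLinearMap

theorem derivL_single (n : ℤ) (a : ℂ) :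
    derivL (AddMonoidAlgebra.single n a : ℂ[T;T⁻¹]) = (AddMonoidAlgebra.single (n-1) ((n : ℂ) * a) : ℂ[T;T⁻¹]) := by
  have h := Finsupp.lsum_single (R := ℂ) (S := ℂ)
    (f := fun n : ℤ => (n : ℂ) • (AddMonoidAlgebra.lsingle (n - 1) : ℂ →ₗ[ℂ] ℂ[T;T⁻¹])) n a
  refine h.trans ?_
  show (n : ℂ) • (AddMonoidAlgebra.single (n-1) a) = _
  rw [AddMonoidAlgebra.smul_single, smul_eq_mul]

theorem derivL_CT (n : ℤ) (a : ℂ) :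
    derivL (C a * T n) = (n : ℂ) • (C a * T (n-1)) := by
  rw [← single_eq_C_mul_T, ← single_eq_C_mul_T, derivL_single, AddMonoidAlgebra.smul_single, smul_eq_mul]

theorem CT_mul_CT (m n : ℤ) (a b : ℂ) :
    (C a * T m) * (C b * T n) = C (a*b) * T (m+n) := by
  rw [T_add, map_mul]; ring

theorem derivL_mul (f g : R) : derivL (f * g) = f * derivL g + g * derivL f := by
  induction f using AddMonoidAlgebra.induction_linear with
  | zero => simp
  | add p q hp hq => rw [add_mul, map_add, hp, hq, map_add]; ring
  | single m a =>
    induction g using AddMonoidAlgebra.induction_linear with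
    | zero => simp
    | add p q hp hq => rw [mul_add, map_add, hp, hq, map_add]; ring
    | single n b =>
      rw [single_eq_C_mul_T, single_eq_C_mul_T, CT_mul_CT, derivL_CT, derivL_CT, derivL_CT]
      rw [mul_smul_comm, mul_smul_comm, CT_mul_CT, CT_mul_CT, mul_comm b a,
        show m + n - 1 = m + (n-1) by ring]
      rw [show n + (m-1) = m + (n-1) from by ring, ← add_smul]
      push_cast
      ring_nf

theorem derivL_coeff_neg_one (f : ℂ[T;T⁻¹]) : (derivL f).coeff (-1) = 0 := by
  induction f using AddMonoidAlgebra.induction_linear with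
  | zero => simp
  | add a b ha hb => rw [map_add]; rw [AddMonoidAlgebra.coeff_add, Finsupp.add_apply, ha, hb, add_zero]
  | single n a =>
    rw [derivL_single, AddMonoidAlgebra.coeff_single, Finsupp.single_apply]
    split_ifs with h
    · simp [show n = 0 by omega]
    · rfl

def derivD : Derivation ℂ R R where
  toLinearMap := derivL
  map_one_eq_zero' := by
    have : (1 : R) = C 1 * T 0 := by simp
    rw [this, derivL_CT]; simp
  leibniz' := fun f g => by
    rw [smul_eq_mul, smul_eq_mul]; exact derivL_mul f g

theorem D_T (n : ℤ) : DD (T n) = (n : ℂ) • ((T (n-1) : R) • dx) := by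
  induction n using Int.induction_on with
  | zero => simp [show ((T 0 : R)) = 1 from T_zero]
  | succ k ih =>
    have : (T (k+1) : R) = T k * T 1 := by rw [← T_add]
    rw [this, Derivation.leibniz, ih]
    rw [smul_comm, smul_smul, ← T_add]
    have h1 : (1 : ℤ) + (k - 1) = k := by ring
    have h2 : ((k : ℤ) + 1) - 1 = k := by ring
    rw [h1, h2]
    push_cast
    rw [add_smul, one_smul]
    exact add_comm _ _
  | pred k ih =>
    have hT1 : DD (T (-1) : R) = -((T (-2) : R) • dx) := by
      have h0 : (T 1 : R) * T (-1) = 1 := by rw [← T_add]; simp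
      have := DD.leibniz (T 1 : R) (T (-1) : R)
      rw [h0, Derivation.map_one_eq_zero] at this
      have h3 := congrArg (fun ω => (T (-1) : R) • ω) this.symm
      simp only [smul_add, smul_smul, ← T_add] at h3
      rw [show (-1 : ℤ) + 1 = 0 by ring, T_zero, one_smul] at h3
      rw [show (-1 : ℤ) + (-1 : ℤ) = -2 by ring, smul_zero] at h3
      linear_combination (norm := module) h3
    have : (T (-(k:ℤ)-1) : R) = T (-k) * T (-1) := by rw [← T_add]; ring_nf
    rw [this, Derivation.leibniz, ih, hT1, smul_neg, smul_smul, ← T_add,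
      smul_comm, smul_smul, ← T_add]
    rw [show (-1 : ℤ) + (-(k:ℤ) - 1) = -(k:ℤ) + -2 by ring]
    rw [show (-(k:ℤ) - 1) - 1 = -(k:ℤ) + -2 by ring]
    push_cast
    module

theorem D_eq (f : R) : DD f = derivL f • dx := by
  induction f using AddMonoidAlgebra.induction_linear with
  | zero => simp
  | add p q hp hq => rw [map_add, map_add, hp, hq, add_smul]
  | single n a =>
    rw [single_eq_C_mul_T (R := ℂ), Derivation.leibniz, derivL_CT]
    have hCa : DD (C a) = 0 := by
      rw [C_eq_algebraMap, Derivation.map_algebraMap]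
    rw [hCa, smul_zero, add_zero, D_T, smul_comm, smul_smul, smul_assoc]

theorem exists_c (g : R) : ∃ c : ℂ, ∃ f : R, g • dx = (C c * T (-1) : R) • dx + DD f := by
  induction g using AddMonoidAlgebra.induction_linear with
  | zero => exact ⟨0, 0, by simp⟩
  | add p q hp hq =>
    obtain ⟨c1, f1, h1⟩ := hp; obtain ⟨c2, f2, h2⟩ := hq
    refine ⟨c1 + c2, f1 + f2, ?_⟩
    rw [add_smul, h1, h2, map_add, map_add, add_mul, add_smul]
    abel
  | single n a =>
    by_cases hn : n = -1
    · refine ⟨a, 0, ?_⟩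
      rw [map_zero, add_zero, ← single_eq_C_mul_T, hn]
    · refine ⟨0, AddMonoidAlgebra.single (n+1) (a / ((n : ℂ)+1)), ?_⟩
      rw [map_zero, zero_mul, zero_smul, zero_add, D_eq, derivL_single]
      have hne : (n : ℂ) + 1 ≠ 0 := by
        intro h
        apply hn
        have h2 : ((n : ℂ)) = ((-1 : ℤ) : ℂ) := by push_cast; linear_combination h
        exact_mod_cast h2
      have h3 : ((n + 1 : ℤ) : ℂ) * (a / ((n : ℂ) + 1)) = a := by
        push_cast
        field_simp
      rw [show n + 1 - 1 = n from by ring, h3]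

namespace LKH1

theorem surj (ω : Ω) : ∃ g : R, ∃ f : R, ω = g • dx + DD f := by
  have hmem : ω ∈ Submodule.span R (Set.range (DD : R → Ω)) := by
    rw [KaehlerDifferential.span_range_derivation]; trivial
  induction hmem using Submodule.span_induction with
  | mem x hx =>
    obtain ⟨s, rfl⟩ := hx
    exact ⟨derivL s, 0, by rw [map_zero, add_zero, D_eq]⟩
  | zero => exact ⟨0, 0, by simp⟩
  | add x y _ _ hx hy =>
    obtain ⟨g1, f1, h1⟩ := hx; obtain ⟨g2, f2, h2⟩ := hy
    exact ⟨g1 + g2, f1 + f2, by rw [h1, h2, map_add, add_smul]; abel⟩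
  | smul a x _ hx =>
    obtain ⟨g, f, h⟩ := hx
    refine ⟨a * g - f * derivL a, a * f, ?_⟩
    have hDf : a • DD f = DD (a * f) - f • DD a := by
      rw [Derivation.leibniz]; abel
    rw [h, smul_add, hDf, D_eq a, smul_smul, smul_smul, sub_smul]
    abel

theorem coeff_eq {c : ℂ} {ω : Ω} {f : R}
    (h : ω - (C c * T (-1) : R) • dx = DD f) :
    c = (derivD.liftKaehlerDifferential ω).coeff (-1) := by
  set φ := derivD.liftKaehlerDifferential with hφ
  have hfapp : ∀ u : R, φ (DD u) = derivL u := fun u =>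
    derivD.liftKaehlerDifferential_comp_D u
  have hone : derivL (T 1 : R) = 1 := by
    have h1 : (T 1 : R) = C 1 * T 1 := by rw [map_one, one_mul]
    rw [h1, derivL_CT]
    norm_num
  have := congrArg φ h
  rw [map_sub, map_smul, hfapp, hfapp, hone, smul_eq_mul, mul_one] at this
  rw [← single_eq_C_mul_T, sub_eq_iff_eq_add] at this
  have h4 := congrArg (fun p : R => p.coeff (-1)) this
  beta_reduce at h4
  rw [AddMonoidAlgebra.coeff_add, Finsupp.add_apply, derivL_coeff_neg_one, AddMonoidAlgebra.coeff_single, Finsupp.single_apply] at h4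
  simp at h4
  exact h4.symm

theorem main_exact (ω : Ω) : ∃ c : ℂ, ∃ f : R, ω - (C c * T (-1) : R) • dx = DD f := by
  obtain ⟨g, f, hgf⟩ := surj ω
  obtain ⟨c, f2, hc⟩ := exists_c g
  exact ⟨c, f2 + f, by rw [hgf, hc, map_add]; abel⟩

end LKH1




/-- For the Laurent polynomial ring `R = ℂ[x, x⁻¹]` with universal derivation
`D : R → Ω_{R/ℂ}`: every `ω ∈ Ω_{R/ℂ}` differs from a unique complex multiple of the
logarithmic form `dx/x = x⁻¹ • D(x)` by an exact form; i.e. `Ω_{R/ℂ}/D(R)` is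
one-dimensional over `ℂ`, spanned by the class of `dx/x`. -/
theorem laurent_kaehler_H1_one_dimensional
    (ω : Ω[LaurentPolynomial ℂ⁄ℂ]) :
    ∃! c : ℂ, ∃ f : LaurentPolynomial ℂ,
      ω - (LaurentPolynomial.C c : LaurentPolynomial ℂ) •
            ((LaurentPolynomial.T (-1) : LaurentPolynomial ℂ) •
              KaehlerDifferential.D ℂ (LaurentPolynomial ℂ)
                (LaurentPolynomial.T 1 : LaurentPolynomial ℂ)) =
        KaehlerDifferential.D ℂ (LaurentPolynomial ℂ) f := by
  obtain ⟨c, f, hc⟩ := LKH1.main_exact ω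
  refine ⟨c, ⟨f, by rw [smul_smul]; exact hc⟩, ?_⟩
  intro y hy
  obtain ⟨fy, hfy⟩ := hy
  rw [smul_smul] at hfy
  rw [LKH1.coeff_eq hfy, LKH1.coeff_eq hc]
end
end
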